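/- Let p be a prime not dividing the positive integer m. Writing Φ_{mp}(z) = ∑_{k=0}^{(p-1)φ(m)} a_{mp}(k) z^{(p-1)φ(m)-k} and Φ_m(z) = ∑_{s=0}^{φ(m)} a_m(s) z^{φ(m)-s}, one has for every k ∈ {0,1,...,(p-1)φ(m)}: a_{mp}(k) = ∑_{s=0}^{⌊k/p⌋} a_m(s) · H_{k-sp}(ζ*_m), where H_r(ζ*_m) denotes the complete homogeneous symmetric polynomial of degree r evaluated at the primitive m-th roots of unity. -/

import Mathlib

open Polynomial

/-- The complete homogeneous symmetric polynomial of degree `r`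
evaluated at the entries of a list. -/
noncomputable def hsymmEval : List ℂ → ℕ → ℂ
  | _, 0 => 1
  | [], _ + 1 => 0
  | x :: xs, r + 1 => x * hsymmEval (x :: xs) r + hsymmEval xs (r + 1)
  termination_by l r => (r, l.length)

/-- The list of the `φ(m)` primitive `m`-th roots of unity. -/
noncomputable def primRoots (m : ℕ) : List ℂ :=
  ((List.range m).filter (fun j => Nat.gcd (j + 1) m = 1)).map
    (fun j => Complex.exp (2 * (Real.pi : ℂ) * Complex.I * (j + 1 : ℕ) / (m : ℂ)))

/-- The list of the non-primitive `m`-th roots of unity. -/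
noncomputable def nonPrimRoots (m : ℕ) : List ℂ :=
  ((List.range m).filter (fun j => 1 < Nat.gcd (j + 1) m)).map
    (fun j => Complex.exp (2 * (Real.pi : ℂ) * Complex.I * (j + 1 : ℕ) / (m : ℂ)))

/-!
Since `p ∤ m`, `Φ_m(X^p) = Φ_{mp}(X) Φ_m(X)`; reversing the three polynomials gives
`rev Φ_m(X^p) = rev Φ_{mp}(X) · rev Φ_m(X)`. As `rev Φ_m = ∏ (1 - ζ X)` over the primitive
`m`-th roots `ζ`, its inverse in `ℂ⟦X⟧` is the generating series `∑ H_r(ζ*_m) X^r`, so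
`rev Φ_{mp}(X) = rev Φ_m(X^p) · ∑ H_r(ζ*_m) X^r`. The coefficient of `X^k` on the left is
`a_{mp}(k)`, and on the right it is the stated convolution.
-/

lemma one_sub_C_mul_X_mul_mk_hsymmEval_cons (x : ℂ) (xs : List ℂ) :
    (1 - PowerSeries.C x * PowerSeries.X) * PowerSeries.mk (hsymmEval (x :: xs)) =
      PowerSeries.mk (hsymmEval xs) := by
  ext (_ | n)
  · simp [sub_mul, hsymmEval]
  · simp [sub_mul, mul_assoc, PowerSeries.coeff_succ_X_mul, hsymmEval]

lemma coe_prod_one_sub_C_mul_X_mul_mk_hsymmEval (L : List ℂ) :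
    (((L.map fun x => 1 - C x * X).prod : ℂ[X]) : PowerSeries ℂ) *
      PowerSeries.mk (hsymmEval L) = 1 := by
  induction L with
  | nil => ext (_ | n) <;> simp [hsymmEval, PowerSeries.coeff_one]
  | cons x xs ih =>
    rw [List.map_cons, List.prod_cons, coe_mul, mul_right_comm, coe_sub, coe_one, coe_mul,
      coe_C, coe_X, one_sub_C_mul_X_mul_mk_hsymmEval_cons, mul_comm, ih]

namespace Polynomial

lemma reverse_X_pow_sub_C {R : Type*} [Ring R] [Nontrivial R] (n : ℕ) (a : R) :
    (X ^ n - C a).reverse = 1 - C a * X ^ n := by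
  rw [sub_eq_add_neg, ← C_neg, reverse_add_C, natDegree_X_pow, ← one_mul (X ^ n),
    reverse_mul_X_pow, ← C_1, reverse_C, C_neg, neg_mul, ← sub_eq_add_neg]

lemma reverse_list_prod {R : Type*} [Semiring R] [NoZeroDivisors R] (L : List R[X]) :
    L.prod.reverse = (L.map reverse).prod := by
  induction L with
  | nil => simpa using reverse_C (1 : R)
  | cons f fs ih => rw [List.prod_cons, reverse_mul_of_domain, ih, List.map_cons, List.prod_cons]

lemma reverse_prod_X_pow_sub_C {R : Type*} [Ring R] [IsDomain R] (n : ℕ) (L : List R) :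
    ((L.map fun a => X ^ n - C a).prod).reverse = (L.map fun a => 1 - C a * X ^ n).prod := by
  rw [reverse_list_prod, List.map_map]
  exact congrArg List.prod (List.map_congr_left fun a _ => reverse_X_pow_sub_C n a)

lemma reverse_prod_X_sub_C {R : Type*} [Ring R] [IsDomain R] (L : List R) :
    ((L.map fun a => X - C a).prod).reverse = (L.map fun a => 1 - C a * X).prod := by
  simpa only [pow_one] using reverse_prod_X_pow_sub_C 1 L

lemma reverse_expand_prod_X_sub_C {R : Type*} [CommRing R] [IsDomain R] (n : ℕ) (L : List R) :
    (expand R n (L.map fun a => X - C a).prod).reverse =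
      expand R n (L.map fun a => X - C a).prod.reverse := by
  simp only [reverse_prod_X_sub_C, map_list_prod, List.map_map, Function.comp_def, map_sub,
    map_one, map_mul, expand_C, expand_X, reverse_prod_X_pow_sub_C]

lemma coeff_coe_expand_mul {R : Type*} [CommSemiring R] {p : ℕ} (hp : 0 < p) (f : R[X])
    (g : PowerSeries R) (k : ℕ) :
    PowerSeries.coeff k ((expand R p f : PowerSeries R) * g) =
      ∑ s ∈ Finset.range (k / p + 1), f.coeff s * PowerSeries.coeff (k - s * p) g := by
  induction f using Polynomial.induction_on' with
  | add f₁ f₂ h₁ h₂ =>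
    simp only [map_add, coe_add, add_mul, h₁, h₂, coeff_add, Finset.sum_add_distrib]
  | monomial n a =>
    rw [expand_monomial, ← C_mul_X_pow_eq_monomial, coe_mul, coe_C, coe_pow, coe_X, mul_assoc,
      PowerSeries.coeff_C_mul, PowerSeries.coeff_X_pow_mul']
    simp [coeff_monomial, Nat.le_div_iff_mul_le hp]

end Polynomial

lemma primRoots_eq_map_pow (m : ℕ) :
    primRoots m = ((List.range m).filter (fun j => Nat.gcd (j + 1) m = 1)).map
      (fun j => Complex.exp (2 * Real.pi * Complex.I / m) ^ (j + 1)) := by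
  refine List.map_congr_left fun j _ => ?_
  rw [← Complex.exp_nat_mul]
  ring_nf

lemma isPrimitiveRoot_of_mem_primRoots {m : ℕ} (hm : m ≠ 0) {z : ℂ} (hz : z ∈ primRoots m) :
    IsPrimitiveRoot z m := by
  rw [primRoots_eq_map_pow] at hz
  obtain ⟨j, hj, rfl⟩ := List.mem_map.mp hz
  exact (Complex.isPrimitiveRoot_exp m hm).pow_of_coprime _
    (by simpa using (List.mem_filter.mp hj).2)

lemma primRoots_nodup (m : ℕ) : (primRoots m).Nodup := by
  rcases eq_or_ne m 0 with rfl | hm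
  · simp [primRoots]
  rw [primRoots_eq_map_pow]
  refine List.Nodup.map_on (fun i hi j hj hij => ?_) (List.nodup_range.filter _)
  have hζ := Complex.isPrimitiveRoot_exp m hm
  rw [pow_succ, pow_succ] at hij
  exact hζ.pow_inj (List.mem_range.mp (List.mem_filter.mp hi).1)
    (List.mem_range.mp (List.mem_filter.mp hj).1) (mul_right_cancel₀ (hζ.ne_zero hm) hij)

lemma length_primRoots (m : ℕ) : (primRoots m).length = m.totient := by
  have hIco : Finset.Ico 1 (1 + m) = (Finset.range m).map (addRightEmbedding 1) := by
    rw [Finset.range_eq_Ico, Finset.map_add_right_Ico, zero_add, add_comm]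
  rw [primRoots, List.length_map, ← Nat.filter_coprime_Ico_eq_totient m 1, hIco,
    Finset.filter_map, Finset.card_map]
  simp only [Function.comp_def, addRightEmbedding_apply, Nat.coprime_comm (n := m), Nat.Coprime]
  rfl

lemma coe_primRoots {m : ℕ} (hm : m ≠ 0) :
    (primRoots m : Multiset ℂ) = (primitiveRoots m ℂ).val := by
  refine Multiset.eq_of_le_of_card_le ?_ ?_
  · rw [Multiset.le_iff_subset (by exact_mod_cast primRoots_nodup m)]
    exact fun z hz => (mem_primitiveRoots (Nat.pos_of_ne_zero hm)).mpr
      (isPrimitiveRoot_of_mem_primRoots hm (Multiset.mem_coe.mp hz))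
  · rw [Multiset.coe_card, length_primRoots, ← Complex.card_primitiveRoots]
    rfl

lemma cyclotomic_eq_prod_primRoots {m : ℕ} (hm : m ≠ 0) :
    cyclotomic m ℂ = ((primRoots m).map fun ζ => X - C ζ).prod := by
  rw [cyclotomic_eq_prod_X_sub_primitiveRoots (Complex.isPrimitiveRoot_exp m hm),
    Finset.prod_eq_multiset_prod, ← coe_primRoots hm, Multiset.map_coe, Multiset.prod_coe]

lemma coe_reverse_cyclotomic_mul_mk_hsymmEval {m : ℕ} (hm : m ≠ 0) :
    ((cyclotomic m ℂ).reverse : PowerSeries ℂ) *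
      PowerSeries.mk (hsymmEval (primRoots m)) = 1 := by
  rw [cyclotomic_eq_prod_primRoots hm, reverse_prod_X_sub_C,
    coe_prod_one_sub_C_mul_X_mul_mk_hsymmEval]

lemma coe_reverse_cyclotomic_mul_prime {m p : ℕ} (hp : p.Prime) (hpm : ¬ p ∣ m) :
    ((cyclotomic (m * p) ℂ).reverse : PowerSeries ℂ) =
      (expand ℂ p (cyclotomic m ℂ).reverse : PowerSeries ℂ) *
        PowerSeries.mk (hsymmEval (primRoots m)) := by
  have hm : m ≠ 0 := by rintro rfl; exact hpm (dvd_zero p)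
  rw [cyclotomic_eq_prod_primRoots hm, ← reverse_expand_prod_X_sub_C,
    ← cyclotomic_eq_prod_primRoots hm, cyclotomic_expand_eq_cyclotomic_mul hp hpm,
    reverse_mul_of_domain, coe_mul, mul_assoc, coe_reverse_cyclotomic_mul_mk_hsymmEval hm, mul_one]

theorem cyclotomic_coeff_recursion_general (m p : ℕ) (hp : p.Prime) (hpm : ¬ p ∣ m) :
    ∀ k ≤ (p - 1) * m.totient,
      (Polynomial.cyclotomic (m * p) ℂ).coeff ((p - 1) * m.totient - k) =
        ∑ s ∈ Finset.range (k / p + 1),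
          (Polynomial.cyclotomic m ℂ).coeff (m.totient - s) *
            hsymmEval (primRoots m) (k - s * p) := by
  intro k hk
  have hdeg : (cyclotomic (m * p) ℂ).natDegree = (p - 1) * m.totient := by
    rw [natDegree_cyclotomic,
      Nat.totient_mul (Nat.coprime_comm.mp (hp.coprime_iff_not_dvd.mpr hpm)),
      Nat.totient_prime hp, mul_comm]
  have hkp : k / p ≤ m.totient :=
    Nat.div_le_of_le_mul (hk.trans (Nat.mul_le_mul_right _ (Nat.sub_le p 1)))
  have h := congrArg (PowerSeries.coeff k) (coe_reverse_cyclotomic_mul_prime hp hpm)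
  rw [coeff_coe, coeff_reverse, hdeg, revAt_le hk, coeff_coe_expand_mul hp.pos] at h
  rw [h]
  refine Finset.sum_congr rfl fun s hs => ?_
  rw [coeff_reverse, natDegree_cyclotomic,
    revAt_le ((Nat.lt_succ_iff.mp (Finset.mem_range.mp hs)).trans hkp), PowerSeries.coeff_mk]

theorem cyclotomic_coeff_recursion (m p : ℕ) (hp : p.Prime) (hpm : ¬ p ∣ m)
    (hm : 1 ≤ m) :
    ∀ k ≤ (p - 1) * m.totient,
      (Polynomial.cyclotomic (m * p) ℂ).coeff ((p - 1) * m.totient - k) =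
        ∑ s ∈ Finset.range (k / p + 1),
          (Polynomial.cyclotomic m ℂ).coeff (m.totient - s) *
            hsymmEval (primRoots m) (k - s * p) :=
  cyclotomic_coeff_recursion_general m p hp hpm
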